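/- arXiv:math/0510474 — 4 statements merged into one kernel-verified Lean document; each statement's English description precedes it below -/
import Mathlib

section
/- If Λ = p + iq (p, q real, c ≠ 0) satisfies the dispersion relation 2(cosh Λ − 1) + h² − c²Λ² = 0, then the imaginary part is bounded by the real part: q² ≤ p² + (4/c²)·cosh²(p/2). -/
/-!
Only the real part of the dispersion relation is needed:
`c²(q² - p²) = 2 - 2 cosh p cos q - h² ≤ 2 + 2 cosh p = 4 cosh²(p/2)`,
because `cos q ≥ -1`, `cosh p > 0` and `h² ≥ 0`; dividing by `c² > 0` gives the bound.
-/

open Complex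

theorem Complex.cosh_add_mul_I_re (p q : ℝ) :
    (cosh (p + q * I)).re = Real.cosh p * Real.cos q := by
  simp [cosh_add, cosh_mul_I, sinh_mul_I, cosh_ofReal_re, ← ofReal_cos, ← ofReal_sin,
    ← ofReal_sinh]

theorem Real.two_add_two_mul_cosh (x : ℝ) : 2 + 2 * cosh x = 4 * cosh (x / 2) ^ 2 := by
  have h := cosh_two_mul (x / 2)
  rw [mul_div_cancel₀ x two_ne_zero, sinh_sq] at h
  linarith

theorem Real.neg_cosh_le_cosh_mul_cos (p q : ℝ) : -cosh p ≤ cosh p * cos q := by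
  nlinarith [cosh_pos p, neg_one_le_cos q]

theorem dispersion_re_eq (c h p q : ℝ) :
    (2 * (cosh (p + q * I) - 1) + (h : ℂ) ^ 2 - (c : ℂ) ^ 2 * (p + q * I) ^ 2).re
      = c ^ 2 * (q ^ 2 - p ^ 2) + h ^ 2 + 2 * (Real.cosh p * Real.cos q - 1) := by
  simp only [sub_re, add_re, mul_re, add_im, mul_im, sub_im, pow_two, cosh_add_mul_I_re,
    ofReal_re, ofReal_im, I_re, I_im, re_ofNat, im_ofNat, one_re, one_im]
  ring

theorem dispersion_imaginary_part_bound (c h p q : ℝ) (hc : c ≠ 0)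
    (hroot : 2 * (Complex.cosh (p + q * Complex.I) - 1) + (h : ℂ)^2
      - (c : ℂ)^2 * (p + q * Complex.I)^2 = 0) :
    q^2 ≤ p^2 + (4 / c^2) * (Real.cosh (p / 2))^2 := by
  have hre := congrArg re hroot
  rw [dispersion_re_eq, zero_re] at hre
  have hscaled : c ^ 2 * (q ^ 2 - p ^ 2) ≤ 4 * Real.cosh (p / 2) ^ 2 := by
    nlinarith [Real.two_add_two_mul_cosh p, Real.neg_cosh_le_cosh_mul_cos p q, sq_nonneg h]
  have hq : q ^ 2 - p ^ 2 ≤ 4 / c ^ 2 * Real.cosh (p / 2) ^ 2 := by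
    rw [div_mul_eq_mul_div, le_div_iff₀ (by positivity), mul_comm]
    exact hscaled
  linarith
end

section
/- For every 0 < P < π/2, setting c² = sin P · cos P / P and h² = 4 sin P (sin P − P cos P), the value K = P is a double root of the equation sin²K = h²/4 + c²K²; that is, both the equation and its derivative with respect to K vanish at K = P. -/
theorem double_root_parametrization (P : ℝ) (hP : 0 < P) (hP' : P < Real.pi / 2) :
    let c2 := Real.sin P * Real.cos P / P
    let h2 := 4 * Real.sin P * (Real.sin P - P * Real.cos P)
    let g : ℝ → ℝ := fun K => (Real.sin K)^2 - (h2 / 4 + c2 * K^2)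
    g P = 0 ∧ deriv g P = 0 := by
  intro c2 h2 g
  have hPne : P ≠ 0 := ne_of_gt hP
  constructor
  · show (Real.sin P)^2 - (h2 / 4 + c2 * P^2) = 0
    simp only [c2, h2]
    field_simp
    ring
  · have hd : deriv g P = 2 * Real.sin P * Real.cos P - c2 * (2 * P) := by
      have : HasDerivAt g (2 * Real.sin P * Real.cos P - c2 * (2 * P)) P := by
        have h1 : HasDerivAt (fun K : ℝ => (Real.sin K)^2)
            (2 * Real.sin P ^ 1 * Real.cos P) P :=
          (Real.hasDerivAt_sin P).pow 2
        have h2' : HasDerivAt (fun K : ℝ => h2 / 4 + c2 * K^2)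
            (0 + c2 * (2 * P ^ 1)) P :=
          (hasDerivAt_const P (h2/4)).add (((hasDerivAt_pow 2 P)).const_mul c2)
        have := h1.sub h2'
        simp only [pow_one, zero_add] at this
        exact this
      exact this.deriv
    rw [hd]
    simp only [c2]
    field_simp
    ring
end

section
/- Define coefficients aₘ by a_{2n+1} = (−1)ⁿ(2n)! bₙ and a_{2n} = 0 for n ≥ 1, where (bₙ) satisfies b₀ = √2 and b_{n+1} = bₙ + Σ_{l+k≤n+1} [(2l)!(2k)!(2n+2−2l−2k)!/(2n+4)!] b_l b_k b_{n+1−l−k}. Then (aₘ) satisfies the recurrence m(m+1)(m+2)(m+3)aₘ + (m+2)(m+3)a_{m+2} − Σ_{l+k≤m+3, l,k≥1} a_l a_k a_{m+4−l−k} = 0 for all m ≥ 1, with a₁ = √2, a₂ = 0. -/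
open Finset

lemma sum_odd_reindex (f : ℕ → ℝ) (hf : ∀ j, 1 ≤ j → Even j → f j = 0) :
    ∀ N : ℕ, ∑ l ∈ Icc 1 (2 * N + 1), f l = ∑ i ∈ range (N + 1), f (2 * i + 1) := by
  intro N
  induction N with
  | zero => simp
  | succ N ih =>
    have h1 : 2 * (N + 1) + 1 = (2 * N + 1) + 1 + 1 := by ring
    rw [h1, Finset.sum_Icc_succ_top (by omega), Finset.sum_Icc_succ_top (by omega), ih,
      Finset.sum_range_succ]
    have h2 : f (2 * N + 1 + 1) = 0 := hf _ (by omega) ⟨N + 1, by omega⟩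
    have h3 : 2 * N + 1 + 1 + 1 = 2 * (N + 1) + 1 := by ring
    rw [h2, h3]
    simp [Finset.sum_range_succ]

theorem inverse_power_series_recurrence (b : ℕ → ℝ) (a : ℕ → ℝ)
    (hb0 : b 0 = Real.sqrt 2)
    (hb : ∀ n : ℕ, b (n + 1) = b n +
      ∑ l ∈ range (n + 2), ∑ k ∈ range (n + 2 - l),
        (((2 * l).factorial * (2 * k).factorial
            * (2 * (n + 1 - l - k)).factorial : ℝ) / ((2 * n + 4).factorial : ℝ))
          * (b l * b k * b (n + 1 - l - k)))
    (ha_odd : ∀ n : ℕ, a (2 * n + 1) = (-1) ^ n * ((2 * n).factorial : ℝ) * b n)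
    (ha_even : ∀ n : ℕ, 1 ≤ n → a (2 * n) = 0) :
    a 1 = Real.sqrt 2 ∧ a 2 = 0 ∧
      ∀ m : ℕ, 1 ≤ m →
        (m : ℝ) * (m + 1) * (m + 2) * (m + 3) * a m + ((m : ℝ) + 2) * ((m : ℝ) + 3) * a (m + 2)
          - ∑ l ∈ Icc 1 (m + 2), ∑ k ∈ Icc 1 (m + 3 - l), a l * a k * a (m + 4 - l - k) = 0 := by
  -- a vanishes at even indices ≥ 2
  have haE : ∀ j : ℕ, 2 ≤ j → Even j → a j = 0 := by
    intro j hj ⟨s, hs⟩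
    have : j = 2 * s := by omega
    rw [this]
    exact ha_even s (by omega)
  have ha1 : a 1 = Real.sqrt 2 := by
    have := ha_odd 0
    simpa [hb0] using this
  refine ⟨ha1, ha_even 1 le_rfl, ?_⟩
  intro m hm
  rcases Nat.even_or_odd m with ⟨t, ht⟩ | ⟨n, hn⟩
  · -- even case: everything vanishes
    have hm0 : a m = 0 := haE m (by omega) ⟨t, ht⟩
    have hm2 : a (m + 2) = 0 := haE _ (by omega) ⟨t + 1, by omega⟩
    have hS : ∑ l ∈ Icc 1 (m + 2), ∑ k ∈ Icc 1 (m + 3 - l), a l * a k * a (m + 4 - l - k) = 0 := by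
      apply Finset.sum_eq_zero
      intro l hl
      apply Finset.sum_eq_zero
      intro k hk
      simp only [Finset.mem_Icc] at hl hk
      rcases Nat.even_or_odd l with hle | ⟨i, hi⟩
      · rw [haE l (by rcases hle with ⟨u, hu⟩; omega) hle]; ring
      rcases Nat.even_or_odd k with hke | ⟨j, hj⟩
      · rw [haE k (by rcases hke with ⟨u, hu⟩; omega) hke]; ring
      · have h3 : Even (m + 4 - l - k) := by
          refine ⟨t + 2 - i - j - 1, by omega⟩
        rw [haE _ (by rcases h3 with ⟨u, hu⟩; omega) h3]; ring
    rw [hm0, hm2, hS]; ring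
  · -- odd case : m = 2n + 1
    subst hn
    -- compute the triple sum
    have hsum :
        ∑ l ∈ Icc 1 (2 * n + 1 + 2), ∑ k ∈ Icc 1 (2 * n + 1 + 3 - l),
            a l * a k * a (2 * n + 1 + 4 - l - k)
          = (-1) ^ (n + 1) * ((2 * n + 4).factorial : ℝ) *
            ∑ l ∈ range (n + 2), ∑ k ∈ range (n + 2 - l),
              (((2 * l).factorial * (2 * k).factorial
                  * (2 * (n + 1 - l - k)).factorial : ℝ) / ((2 * n + 4).factorial : ℝ))
                * (b l * b k * b (n + 1 - l - k)) := by
      have houter : (2 * n + 1 + 2) = 2 * (n + 1) + 1 := by ring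
      rw [houter, sum_odd_reindex _ ?_ (n + 1)]
      · -- reindex inner sums and match termwise
        rw [Finset.mul_sum]
        apply Finset.sum_congr (by norm_num [show n + 1 + 1 = n + 2 from rfl])
        intro i hi
        simp only [Finset.mem_range] at hi
        have hinner : (2 * n + 1 + 3 - (2 * i + 1)) = 2 * (n + 1 - i) + 1 := by omega
        rw [hinner, sum_odd_reindex _ ?_ (n + 1 - i), Finset.mul_sum]
        · apply Finset.sum_congr (by congr 1; omega)
          intro j hj
          simp only [Finset.mem_range] at hj
          have h3 : 2 * n + 1 + 4 - (2 * i + 1) - (2 * j + 1) = 2 * (n + 1 - i - j) + 1 := by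
            omega
          rw [h3, ha_odd, ha_odd, ha_odd]
          have hsign : ((-1 : ℝ)) ^ i * (-1) ^ j * (-1) ^ (n + 1 - i - j) = (-1) ^ (n + 1) := by
            rw [← pow_add, ← pow_add]
            congr 1
            omega
          have hfac : ((2 * n + 4).factorial : ℝ) ≠ 0 := by
            exact_mod_cast (2 * n + 4).factorial_ne_zero
          have key : ∀ F B : ℝ, (-1 : ℝ) ^ (n + 1) * ((2 * n + 4).factorial : ℝ) *
              (F / ((2 * n + 4).factorial : ℝ) * B) = (-1 : ℝ) ^ (n + 1) * (F * B) := by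
            intro F B
            field_simp
          rw [key, ← hsign]
          ring
        · -- inner vanishing hypothesis
          intro k hk1 hke
          rw [haE k (by rcases hke with ⟨u, hu⟩; omega) hke]
          ring
      · -- outer vanishing hypothesis
        intro l hl1 hle
        apply Finset.sum_eq_zero
        intro k _
        rw [haE l (by rcases hle with ⟨u, hu⟩; omega) hle]
        ring
    have hbn := hb n
    have hT : ∑ l ∈ range (n + 2), ∑ k ∈ range (n + 2 - l),
        (((2 * l).factorial * (2 * k).factorial
            * (2 * (n + 1 - l - k)).factorial : ℝ) / ((2 * n + 4).factorial : ℝ))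
          * (b l * b k * b (n + 1 - l - k)) = b (n + 1) - b n := by linarith
    rw [hsum, hT, ha_odd n]
    have h2 : 2 * n + 1 + 2 = 2 * (n + 1) + 1 := by ring
    rw [h2, ha_odd (n + 1)]
    have hF1 : (((2 * n + 4).factorial : ℝ)) =
        ((2 * n + 1 : ℕ) : ℝ) * ((2 * n + 2 : ℕ) : ℝ) * ((2 * n + 3 : ℕ) : ℝ) *
          ((2 * n + 4 : ℕ) : ℝ) * ((2 * n).factorial : ℝ) := by
      have : (2 * n + 4).factorial =
          (2 * n + 4) * ((2 * n + 3) * ((2 * n + 2) * ((2 * n + 1) * (2 * n).factorial))) := rfl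
      rw [this]
      push_cast
      ring
    have hF2 : (((2 * (n + 1)).factorial : ℝ)) =
        ((2 * n + 2 : ℕ) : ℝ) * ((2 * n + 1 : ℕ) : ℝ) * ((2 * n).factorial : ℝ) := by
      have : (2 * (n + 1)).factorial = (2 * n + 2) * ((2 * n + 1) * (2 * n).factorial) := rfl
      rw [this]
      push_cast
      ring
    rw [hF1, hF2]
    push_cast
    ring
end

section
/- Let μ_s > 0 satisfy (4/3)μ_s⁴ + 2γμ_s² + τ = 0 for real parameters γ, τ with τ > 0. Then φ(z) = tanh(μ_s z) is an exact solution of the fourth-order equation (1/12)φ⁗ − γφ'' + τφ(1−φ²) + 2μ_s⁴φ³(1−φ²) = 0 on ℝ. -/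
lemma tanh_hasDerivAt' (x : ℝ) : HasDerivAt Real.tanh (1 - Real.tanh x ^ 2) x := by
  have h := (Real.hasDerivAt_sinh x).div (Real.hasDerivAt_cosh x)
    (ne_of_gt (Real.cosh_pos x))
  have he : (Real.sinh / Real.cosh) = Real.tanh :=
    funext fun x => (Real.tanh_eq_sinh_div_cosh x).symm
  rw [he] at h
  refine h.congr_deriv ?_
  have hc := Real.cosh_pos x
  have hid := Real.cosh_sq_sub_sinh_sq x
  rw [Real.tanh_eq_sinh_div_cosh]
  field_simp [Real.tanh_eq_sinh_div_cosh]

lemma scaled_tanh_hasDerivAt (μs x : ℝ) :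
    HasDerivAt (fun x => Real.tanh (μs * x)) (μs * (1 - Real.tanh (μs * x) ^ 2)) x := by
  have h := (tanh_hasDerivAt' (μs * x)).comp x ((hasDerivAt_id x).const_mul μs)
  refine h.congr_deriv ?_
  ring

theorem tanh_exact_solution (γ τ μs : ℝ) (hμ : 0 < μs) (hτ : 0 < τ)
    (hroot : (4/3) * μs^4 + 2 * γ * μs^2 + τ = 0)
    (φ : ℝ → ℝ) (hφ : ∀ z, φ z = Real.tanh (μs * z)) :
    ∀ z : ℝ, (1/12) * iteratedDeriv 4 φ z - γ * iteratedDeriv 2 φ z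
      + τ * φ z * (1 - (φ z)^2) + 2 * μs^4 * (φ z)^3 * (1 - (φ z)^2) = 0 := by
  have hφf : φ = fun z => Real.tanh (μs * z) := funext hφ
  subst hφf
  have h0 := scaled_tanh_hasDerivAt μs
  -- first derivative
  have e1 : deriv (fun z => Real.tanh (μs * z))
      = fun x => μs * (1 - Real.tanh (μs * x) ^ 2) :=
    funext fun x => (h0 x).deriv
  -- second derivative
  have h1 : ∀ x, HasDerivAt (fun x => μs * (1 - Real.tanh (μs * x) ^ 2))
      (-2 * μs^2 * Real.tanh (μs * x) * (1 - Real.tanh (μs * x) ^ 2)) x := by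
    intro x
    have h := ((hasDerivAt_const x (1:ℝ)).sub ((h0 x).pow 2)).const_mul μs
    refine h.congr_deriv ?_
    norm_num
    ring
  have e2 : deriv (fun x => μs * (1 - Real.tanh (μs * x) ^ 2))
      = fun x => -2 * μs^2 * Real.tanh (μs * x) * (1 - Real.tanh (μs * x) ^ 2) :=
    funext fun x => (h1 x).deriv
  -- third derivative
  have h2 : ∀ x, HasDerivAt
      (fun x => -2 * μs^2 * Real.tanh (μs * x) * (1 - Real.tanh (μs * x) ^ 2))
      (-2 * μs^3 * (1 - Real.tanh (μs * x) ^ 2) * (1 - 3 * Real.tanh (μs * x) ^ 2)) x := by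
    intro x
    have h := (((h0 x).const_mul (-2 * μs^2)).mul
      ((hasDerivAt_const x (1:ℝ)).sub ((h0 x).pow 2)))
    refine h.congr_deriv ?_
    norm_num
    ring
  have e3 : deriv (fun x => -2 * μs^2 * Real.tanh (μs * x) * (1 - Real.tanh (μs * x) ^ 2))
      = fun x => -2 * μs^3 * (1 - Real.tanh (μs * x) ^ 2) * (1 - 3 * Real.tanh (μs * x) ^ 2) :=
    funext fun x => (h2 x).deriv
  -- fourth derivative
  have h3 : ∀ x, HasDerivAt
      (fun x => -2 * μs^3 * (1 - Real.tanh (μs * x) ^ 2) * (1 - 3 * Real.tanh (μs * x) ^ 2))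
      (8 * μs^4 * Real.tanh (μs * x) * (1 - Real.tanh (μs * x) ^ 2)
        * (2 - 3 * Real.tanh (μs * x) ^ 2)) x := by
    intro x
    have h := ((((hasDerivAt_const x (1:ℝ)).sub ((h0 x).pow 2)).const_mul (-2 * μs^3)).mul
      ((hasDerivAt_const x (1:ℝ)).sub (((h0 x).pow 2).const_mul 3)))
    refine h.congr_deriv ?_
    norm_num
    ring
  have e4 : deriv (fun x => -2 * μs^3 * (1 - Real.tanh (μs * x) ^ 2)
        * (1 - 3 * Real.tanh (μs * x) ^ 2))
      = fun x => 8 * μs^4 * Real.tanh (μs * x) * (1 - Real.tanh (μs * x) ^ 2)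
        * (2 - 3 * Real.tanh (μs * x) ^ 2) :=
    funext fun x => (h3 x).deriv
  intro z
  have E2 : iteratedDeriv 2 (fun z => Real.tanh (μs * z)) z
      = -2 * μs^2 * Real.tanh (μs * z) * (1 - Real.tanh (μs * z) ^ 2) := by
    rw [show (2:ℕ) = 1 + 1 from rfl, iteratedDeriv_succ, iteratedDeriv_one, e1, e2]
  have E4 : iteratedDeriv 4 (fun z => Real.tanh (μs * z)) z
      = 8 * μs^4 * Real.tanh (μs * z) * (1 - Real.tanh (μs * z) ^ 2)
        * (2 - 3 * Real.tanh (μs * z) ^ 2) := by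
    rw [iteratedDeriv_succ, iteratedDeriv_succ, iteratedDeriv_succ, iteratedDeriv_one,
        e1, e2, e3, e4]
  rw [E2, E4]
  show (1:ℝ)/12 * _ - _ + τ * Real.tanh (μs * z) * (1 - Real.tanh (μs * z)^2)
      + 2 * μs^4 * Real.tanh (μs * z)^3 * (1 - Real.tanh (μs * z)^2) = 0
  linear_combination (Real.tanh (μs * z) * (1 - Real.tanh (μs * z) ^ 2)) * hroot
end
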